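/- For all integers k ≥ 1 and 0 ≤ r ≤ m−1, the generating function of the counts h_{n,k,r} is the (mk−r)-th power of the Fuss–Catalan generating function: Σ_{n≥0} h_{n,k,r} x^n = B(x)^{mk−r} as formal power series in ℤ[[x]]. -/

import Mathlib

open scoped Classical
open Finset

noncomputable section

/-- The set of positive nondecreasing sequences of length `n` bounded above by `b` is finite. -/
lemma boundedSeq_finite (n : ℕ) (b : ℕ → ℕ) :
    {p : Fin n → ℕ | Monotone p ∧ ∀ i : Fin n, 1 ≤ p i ∧ p i ≤ b i}.Finite := by
  have h : {p : Fin n → ℕ | Monotone p ∧ ∀ i : Fin n, 1 ≤ p i ∧ p i ≤ b i} ⊆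
      Set.pi Set.univ (fun i : Fin n => Set.Iic (b i)) := by
    intro p hp
    rw [Set.mem_pi]
    intro i _
    exact (hp.2 i).2
  exact (Set.Finite.pi fun i : Fin n => Set.finite_Iic (b (i : ℕ))).subset h

/-- The finset of nondecreasing sequences `p : Fin n → ℕ` of positive integers
with `p i ≤ b i` for all `i`. -/
def BSeq (n : ℕ) (b : ℕ → ℕ) : Finset (Fin n → ℕ) := (boundedSeq_finite n b).toFinset

/-- `PK m n` : the u-parking distributions of length `n`, i.e. nondecreasing sequences
of positive integers with `p i ≤ m*(i-1)+1` (here indexed from `0`, so `p i ≤ m*i+1`). -/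
def PK (m n : ℕ) : Finset (Fin n → ℕ) := BSeq n (fun i => m * i + 1)

/-- `luck p` : the number of indices `i` with `p i = m*(i-1)+1` (0-indexed: `m*i+1`). -/
def luck (m : ℕ) {n : ℕ} (p : Fin n → ℕ) : ℕ :=
  (Finset.univ.filter (fun i : Fin n => p i = m * (i : ℕ) + 1)).card

/-- `freq j p` = `ω_j(p)` : the number of indices `i` with `p i = j`. -/
def freq (j : ℕ) {n : ℕ} (p : Fin n → ℕ) : ℕ :=
  (Finset.univ.filter (fun i : Fin n => p i = j)).card

/-- `hcnt m n k r` = `h_{n,k,r}` : the number of nondecreasing sequences of positive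
integers with `p_i ≤ m*(i+k-1) - r` for `1 ≤ i ≤ n` (0-indexed: `p i ≤ m*(i+k) - r`). -/
def hcnt (m n k r : ℕ) : ℕ := (BSeq n (fun i => m * (i + k) - r)).card

/-- `Cnt m n k` = `C_{n,k}` : the number of `p ∈ PK m n` with `luck p = k`. -/
def Cnt (m n k : ℕ) : ℕ := ((PK m n).filter (fun p => luck m p = k)).card

/-- `Rpoly m n` = `R_n(q) = Σ_k C_{n,k} q^k ∈ ℤ[q]`. -/
def Rpoly (m n : ℕ) : Polynomial ℤ :=
  ∑ k ∈ Finset.range (n + 1), (Cnt m n k : Polynomial ℤ) * Polynomial.X ^ k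

/-- `hfull t k` : the complete homogeneous symmetric polynomial of degree `k`
in variables `q_0, …, q_{t-1}`, i.e. the sum of all monomials of total degree `k`. -/
def hfull (t k : ℕ) : MvPolynomial (Fin t) ℤ :=
  ∑ α ∈ Finset.Nat.antidiagonalTuple t k, ∏ i : Fin t, MvPolynomial.X i ^ α i

/-- `ffix m p ℓ` = `i_ℓ(p)` : the first fixed point of type `ℓ`, the smallest `k` with
`2 ≤ k ≤ n` and `p_k ≥ m*(k-2)+1+ℓ` (1-indexed), or `n+1` if there is none. -/
def ffix (m : ℕ) {n : ℕ} (p : Fin n → ℕ) (ℓ : ℕ) : ℕ :=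
  sInf ({k | 2 ≤ k ∧ ∃ i : Fin n, (i : ℕ) + 1 = k ∧ m * (k - 2) + 1 + ℓ ≤ p i} ∪ {n + 1})

/-- The extended first fixed points: `i_0 = 2`, `i_{m+1} = n+1`, and `i_ℓ = ffix m p ℓ`
for `1 ≤ ℓ ≤ m`. -/
def ffixE (m : ℕ) {n : ℕ} (p : Fin n → ℕ) (j : ℕ) : ℕ :=
  if j = 0 then 2 else if j = m + 1 then n + 1 else ffix m p j

/-- `pget p k` = `p_k` (1-indexed), `0` out of range. -/
def pget {n : ℕ} (p : Fin n → ℕ) (k : ℕ) : ℕ := if h : k - 1 < n then p ⟨k - 1, h⟩ else 0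

/-- The `(ℓ+1)`-st part `P_{ℓ+1}` (for `0 ≤ ℓ ≤ m`) of the first-return decomposition of `p`:
the list `(p_k - (p_{i_ℓ} - 1))` for `i_ℓ ≤ k ≤ i_{ℓ+1} - 1`. -/
def FRD (m : ℕ) {n : ℕ} (p : Fin n → ℕ) (ℓ : ℕ) : List ℕ :=
  (List.range (ffixE m p (ℓ + 1) - ffixE m p ℓ)).map
    (fun t => pget p (ffixE m p ℓ + t) - (pget p (ffixE m p ℓ) - 1))

/-- A list is a u-parking distribution: nondecreasing, with `l.get i ∈ [1, m*i+1]`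
(0-indexed). -/
def isPKlist (m : ℕ) (l : List ℕ) : Prop :=
  l.Pairwise (· ≤ ·) ∧ ∀ i : Fin l.length, 1 ≤ l.get i ∧ l.get i ≤ m * (i : ℕ) + 1

/-- `θ(p)` : the nondecreasing rearrangement of the concatenation of `p` with the list of
all `j ∈ {1, …, m*n-m+1}` with `j ≢ 1 (mod m)`. -/
def theta (m n : ℕ) (p : Fin n → ℕ) : List ℕ :=
  Multiset.sort
    ((List.ofFn p : Multiset ℕ) +
      (((List.range (m * n - m + 1)).map (· + 1)).filter
        (fun j => ¬ j ≡ 1 [MOD m]) : List ℕ)) (· ≤ ·)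

/-- Parking distributions on the `m`-caterpillar of length `n`, as nondecreasing lists. -/
def PKcat (m n : ℕ) : Set (List ℕ) :=
  {a | a.length = m * n - m + 1 ∧ a.Pairwise (· ≤ ·) ∧
       (∀ x ∈ a, 1 ≤ x ∧ x ≤ m * n - m + 1) ∧
       (∀ i : ℕ, 1 ≤ i → i ≤ n →
         m * (i - 1) + 1 ≤ (a.filter (fun x => x ≤ m * (i - 1) + 1)).length) ∧
       (∀ j : ℕ, 1 ≤ j → j ≤ m * n - m + 1 → ¬ j ≡ 1 [MOD m] → j ∈ a)}

/-! Let `A_t` be the generating function of nondecreasing positive sequences with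
`p i ≤ m * i + t` (0-indexed), so that `A_1 = B`. For `t ≥ 1`, cutting such a sequence at the
first index `j` with `p j > m * j + 1` leaves a u-parking distribution of length `j` and a tail
which, lowered by `m * j + 1`, is bounded by `m * i + (t - 1)`; this bijection gives
`A_t = B * A_(t-1)`, hence `A_t = B ^ t`. The theorem is the case `t = m * k - r`, because
`m * (i + k) - r = m * i + (m * k - r)`. -/

theorem Fin.monotone_append {α : Type*} [Preorder α] {j s : ℕ}
    {u : Fin j → α} {v : Fin s → α}
    (hu : Monotone u) (hv : Monotone v) (huv : ∀ a b, u a ≤ v b) :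
    Monotone (Fin.append u v) := by
  intro a b hab
  induction a using Fin.addCases with
  | left a =>
    induction b using Fin.addCases with
    | left b => simpa using hu (Fin.le_def.mpr hab)
    | right b => simpa using huv a b
  | right a =>
    induction b using Fin.addCases with
    | left b =>
      have := Fin.le_def.mp hab
      simp only [Fin.val_natAdd, Fin.val_castAdd] at this
      omega
    | right b => simpa using hv ((Fin.natAdd_le_natAdd_iff j).mp hab)

section BoundedSequences

variable {m n : ℕ}

@[simp]
lemma mem_BSeq {b : ℕ → ℕ} {p : Fin n → ℕ} :
    p ∈ BSeq n b ↔ Monotone p ∧ ∀ i : Fin n, 1 ≤ p i ∧ p i ≤ b i := by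
  simp [BSeq]

lemma card_BSeq_zero (b : ℕ → ℕ) : (BSeq 0 b).card = 1 :=
  Finset.card_eq_one.mpr ⟨Fin.elim0, by
    ext p
    simp [Subsingleton.elim p Fin.elim0, Subsingleton.monotone]⟩

lemma BSeq_succ_eq_empty {b : ℕ → ℕ} (hb : b 0 = 0) : BSeq (n + 1) b = ∅ := by
  ext p
  simp only [mem_BSeq, Finset.notMem_empty, iff_false, not_and]
  intro _ hp
  have h := hp 0
  rw [Fin.val_zero, hb] at h
  omega

def firstExceed (m : ℕ) {n : ℕ} (p : Fin n → ℕ) : ℕ :=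
  sInf {i | i = n ∨ ∃ h : i < n, m * i + 1 < p ⟨i, h⟩}

lemma firstExceed_le (p : Fin n → ℕ) : firstExceed m p ≤ n :=
  Nat.sInf_le (Or.inl rfl)

lemma le_of_lt_firstExceed {p : Fin n → ℕ} {i : Fin n} (hi : (i : ℕ) < firstExceed m p) :
    p i ≤ m * i + 1 := by
  by_contra! h
  exact (Nat.sInf_le (Or.inr ⟨i.2, h⟩) : firstExceed m p ≤ i).not_gt hi

lemma lt_apply_of_firstExceed_eq {p : Fin n → ℕ} {j : ℕ} (hj : firstExceed m p = j)
    (h : j < n) : m * j + 1 < p ⟨j, h⟩ := by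
  subst hj
  have hmem : firstExceed m p ∈ {i | i = n ∨ ∃ h : i < n, m * i + 1 < p ⟨i, h⟩} :=
    Nat.sInf_mem ⟨n, Or.inl rfl⟩
  obtain h' | ⟨_, h'⟩ := hmem
  · exact absurd h' h.ne
  · exact h'

lemma firstExceed_eq {p : Fin n → ℕ} {j : ℕ} (hj : j ≤ n)
    (hle : ∀ i : Fin n, (i : ℕ) < j → p i ≤ m * i + 1)
    (hlt : ∀ h : j < n, m * j + 1 < p ⟨j, h⟩) : firstExceed m p = j := by
  refine le_antisymm (Nat.sInf_le ?_) (le_csInf ⟨n, Or.inl rfl⟩ ?_)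
  · rcases hj.eq_or_lt with h | h
    exacts [Or.inl h, Or.inr ⟨h, hlt h⟩]
  · rintro i (rfl | ⟨hi, h⟩)
    · exact hj
    · by_contra! hij
      exact (hle ⟨i, hi⟩ hij).not_gt h

variable {j s t : ℕ}

def splitAt (m j : ℕ) {s : ℕ} (p : Fin (j + s) → ℕ) : (Fin j → ℕ) × (Fin s → ℕ) :=
  (fun i => p (Fin.castAdd s i), fun i => p (Fin.natAdd j i) - (m * j + 1))

def joinAt (m j : ℕ) {s : ℕ} (uq : (Fin j → ℕ) × (Fin s → ℕ)) : Fin (j + s) → ℕ :=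
  Fin.append uq.1 fun i => uq.2 i + (m * j + 1)

lemma splitAt_joinAt (uq : (Fin j → ℕ) × (Fin s → ℕ)) :
    splitAt m j (joinAt m j uq) = uq := by
  simp [splitAt, joinAt]

lemma lt_apply_natAdd_of_firstExceed_eq {p : Fin (j + s) → ℕ} (hp : Monotone p)
    (hj : firstExceed m p = j) (i : Fin s) : m * j + 1 < p (Fin.natAdd j i) := by
  have hjs : j < j + s := by have := i.2; omega
  exact (lt_apply_of_firstExceed_eq hj hjs).trans_le (hp (Fin.le_def.mpr (by simp)))

lemma joinAt_splitAt {p : Fin (j + s) → ℕ} (hp : Monotone p) (hj : firstExceed m p = j) :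
    joinAt m j (splitAt m j p) = p := by
  refine (congrArg₂ Fin.append rfl (funext fun i => ?_)).trans Fin.append_castAdd_natAdd
  have := lt_apply_natAdd_of_firstExceed_eq hp hj i
  dsimp only [splitAt]
  omega

lemma splitAt_mem {p : Fin (j + s) → ℕ} (hp : p ∈ BSeq (j + s) (fun i => m * i + (t + 1)))
    (hj : firstExceed m p = j) :
    splitAt m j p ∈ PK m j ×ˢ BSeq s (fun i => m * i + t) := by
  rw [mem_BSeq] at hp
  obtain ⟨hmono, hbd⟩ := hp
  refine Finset.mem_product.mpr
    ⟨mem_BSeq.mpr ⟨?_, fun i => ?_⟩, mem_BSeq.mpr ⟨?_, fun i => ?_⟩⟩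
  · exact fun a b hab => hmono (Fin.le_def.mpr hab)
  · exact ⟨(hbd _).1, le_of_lt_firstExceed (p := p) (i := Fin.castAdd s i) (by simp [hj])⟩
  · exact fun a b hab => Nat.sub_le_sub_right (hmono ((Fin.natAdd_le_natAdd_iff j).mpr hab)) _
  · have hlt := lt_apply_natAdd_of_firstExceed_eq hmono hj i
    have hle := (hbd (Fin.natAdd j i)).2
    simp only [Fin.val_natAdd, Nat.mul_add] at hle
    dsimp only [splitAt]
    omega

lemma joinAt_mem {uq : (Fin j → ℕ) × (Fin s → ℕ)}
    (huq : uq ∈ PK m j ×ˢ BSeq s (fun i => m * i + t)) :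
    joinAt m j uq ∈ BSeq (j + s) (fun i => m * i + (t + 1)) ∧
      firstExceed m (joinAt m j uq) = j := by
  simp only [PK, mem_product, mem_BSeq] at huq
  obtain ⟨⟨humono, hubd⟩, hqmono, hqbd⟩ := huq
  refine ⟨mem_BSeq.mpr ⟨Fin.monotone_append humono ?_ ?_, fun i => ?_⟩,
    firstExceed_eq (by omega) ?_ ?_⟩
  · exact fun a b hab => Nat.add_le_add_right (hqmono hab) _
  · intro a b
    have := hubd a
    have := Nat.mul_le_mul_left m a.2.le
    omega
  · induction i using Fin.addCases with
    | left i =>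
      have := hubd i
      simp only [joinAt, Fin.append_left, Fin.val_castAdd]
      omega
    | right i =>
      have := hqbd i
      simp only [joinAt, Fin.append_right, Fin.val_natAdd, Nat.mul_add]
      omega
  · intro i hi
    rw [show i = Fin.castAdd s ⟨i, hi⟩ from rfl, joinAt, Fin.append_left]
    exact (hubd ⟨i, hi⟩).2
  · intro h
    have := (hqbd ⟨0, by omega⟩).1
    rw [show (⟨j, h⟩ : Fin (j + s)) = Fin.natAdd j ⟨0, by omega⟩ from rfl]
    simp only [joinAt, Fin.append_right]
    omega

lemma card_filter_firstExceed_eq :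
    ((BSeq (j + s) (fun i => m * i + (t + 1))).filter (fun p => firstExceed m p = j)).card =
      (PK m j).card * (BSeq s (fun i => m * i + t)).card := by
  rw [← Finset.card_product]
  refine Finset.card_nbij' (splitAt m j) (joinAt m j) ?_ ?_ ?_ ?_
  · intro p hp
    obtain ⟨hp, hj⟩ := Finset.mem_filter.mp hp
    exact splitAt_mem hp hj
  · intro uq huq
    exact Finset.mem_filter.mpr (joinAt_mem huq)
  · intro p hp
    obtain ⟨hp, hj⟩ := Finset.mem_filter.mp hp
    exact joinAt_splitAt (mem_BSeq.mp hp).1 hj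
  · exact fun uq _ => splitAt_joinAt uq

lemma card_BSeq_add_one (m t n : ℕ) :
    (BSeq n (fun i => m * i + (t + 1))).card =
      ∑ x ∈ antidiagonal n, (PK m x.1).card * (BSeq x.2 (fun i => m * i + t)).card := by
  rw [Finset.card_eq_sum_card_fiberwise (f := firstExceed m) (t := Finset.range (n + 1))
    fun p _ => Finset.mem_range_succ_iff.mpr (firstExceed_le p),
    Finset.Nat.sum_antidiagonal_eq_sum_range_succ_mk]
  refine Finset.sum_congr rfl fun j hj => ?_
  obtain ⟨s, rfl⟩ := Nat.exists_eq_add_of_le (Finset.mem_range_succ_iff.mp hj)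
  rw [Nat.add_sub_cancel_left]
  exact card_filter_firstExceed_eq

end BoundedSequences

theorem mk_card_BSeq_eq_pow (m t : ℕ) :
    (PowerSeries.mk fun n => ((BSeq n (fun i => m * i + t)).card : ℤ)) =
      (PowerSeries.mk fun n => ((PK m n).card : ℤ)) ^ t := by
  induction t with
  | zero =>
    ext (_ | n)
    · simp [card_BSeq_zero]
    · simp [BSeq_succ_eq_empty]
  | succ t ih =>
    ext n
    rw [pow_succ', ← ih, PowerSeries.coeff_mul, PowerSeries.coeff_mk, card_BSeq_add_one]
    simp

theorem stmt4_general (m : ℕ) (k r : ℕ) (hk : 1 ≤ k) (hr : r ≤ m - 1) :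
    (PowerSeries.mk fun n => (hcnt m n k r : ℤ)) =
      (PowerSeries.mk fun n => ((PK m n).card : ℤ)) ^ (m * k - r) := by
  have hbound : (fun i => m * (i + k) - r) = fun i => m * i + (m * k - r) := by
    have := Nat.le_mul_of_pos_right m hk
    funext i
    rw [Nat.mul_add]
    omega
  unfold hcnt
  rw [hbound]
  exact mk_card_BSeq_eq_pow m (m * k - r)

theorem stmt4 (m : ℕ) (hm : 1 ≤ m) (k r : ℕ) (hk : 1 ≤ k) (hr : r ≤ m - 1) :
    (PowerSeries.mk fun n => (hcnt m n k r : ℤ)) =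
      (PowerSeries.mk fun n => ((PK m n).card : ℤ)) ^ (m * k - r) :=
  stmt4_general m k r hk hr

end
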